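/- arXiv:1602.06208 — 2 statements merged into one kernel-verified Lean document; each statement's English description precedes it below -/
import Mathlib

section
/- Let g ≥ 3 and l ≥ 4. Any integer n of length l in base g whose digits are (g-1), (g-1), then arbitrary digits, then 0, (g-1) (i.e., leading digit g-1, second digit g-1, second-to-last digit 0, last digit g-1) is not a sum of two base g palindromes. -/
def IsBasePalindrome (g n : ℕ) : Prop := Nat.digits g n = (Nat.digits g n).reverse

/-!
Cut every number at `g ^ (l - 2)` and call `m / g ^ (l - 2)` its head. The head of `n` is
`g ^ 2 - 1`, so the heads of `p` and `q` sum to `g ^ 2 - 1` or `g ^ 2 - 2`. The two lowest digits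
of `n` force the last digits of `p` and `q` to sum to `g - 1` without carry and their tens digits
to sum to `0` or `g`. The head of a palindrome below `g ^ l` is its last two digits reversed, its
last digit, or `0`, and a nonzero palindrome does not end in `0`; under these constraints the two
heads sum to at most `g (g - 1)` or to exactly `g ^ 2`, which for `g ≥ 3` misses both targets.
-/

namespace Nat

theorem div_pow_mod_eq_of_lt {g m k : ℕ} (hm : m < g ^ (k + 1)) : m / g ^ k % g = m / g ^ k :=
  Nat.mod_eq_of_lt <| Nat.div_lt_of_lt_mul <| by rwa [← pow_succ]

theorem div_pow_eq_of_lt {g m k : ℕ} (hm : m < g ^ (k + 2)) :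
    m / g ^ k = g * (m / g ^ (k + 1) % g) + m / g ^ k % g := by
  rw [div_pow_mod_eq_of_lt hm, pow_succ, ← Nat.div_div_eq_div_mul, Nat.div_add_mod]

theorem mod_add_mod_eq_or (a b g : ℕ) :
    a % g + b % g = (a + b) % g ∨ a % g + b % g = (a + b) % g + g := by
  have := Nat.add_mod_add_ite a b g
  split_ifs at this <;> omega

end Nat

namespace IsBasePalindrome

open Nat

variable {g p : ℕ}

theorem div_pow_mod_eq (hg : 1 < g) (hp : IsBasePalindrome g p) {i j : ℕ}
    (hij : i + j + 1 = (digits g p).length) : p / g ^ i % g = p / g ^ j % g := by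
  obtain rfl : j = (digits g p).length - 1 - i := by omega
  rw [← getD_digits _ _ hg, ← getD_digits _ _ hg, ← List.getD_reverse _ (by omega), ← hp]

theorem eq_zero_of_mod_eq_zero (hg : 1 < g) (hp : IsBasePalindrome g p) (h : p % g = 0) :
    p = 0 := by
  by_contra hp0
  obtain ⟨L, hL⟩ : ∃ L, (digits g p).length = L + 1 :=
    Nat.exists_eq_succ_of_ne_zero (List.length_pos_iff.2 (digits_ne_nil_iff_ne_zero.2 hp0)).ne'
  have hlead : p % g = p / g ^ L % g := by
    simpa using hp.div_pow_mod_eq hg (i := 0) (j := L) (by omega)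
  have hlow : g ^ L ≤ p := (lt_digits_length_iff hg p).1 (by omega)
  have hup : p < g ^ (L + 1) := (digits_length_le_iff hg p).1 hL.le
  rw [div_pow_mod_eq_of_lt hup, h] at hlead
  exact absurd (Nat.div_pos_iff.2 ⟨Nat.pow_pos (by omega), hlow⟩) (by omega)

theorem div_pow_eq_or (hg : 1 < g) (hp : IsBasePalindrome g p) {k : ℕ} (hpk : p < g ^ (k + 2)) :
    p / g ^ k = g * (p % g) + p / g % g ∨ p / g ^ k = p % g ∨ p / g ^ k = 0 := by
  have hlen := (digits_length_le_iff hg p).2 hpk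
  obtain hL | hL | hL : (digits g p).length = k + 2 ∨ (digits g p).length = k + 1 ∨
      (digits g p).length ≤ k := by omega
  · have h0 := hp.div_pow_mod_eq hg (i := 0) (j := k + 1) (by omega)
    have h1 := hp.div_pow_mod_eq hg (i := 1) (j := k) (by omega)
    rw [pow_zero, Nat.div_one] at h0
    rw [pow_one] at h1
    rw [h0, h1]
    exact Or.inl (div_pow_eq_of_lt hpk)
  · have h0 := hp.div_pow_mod_eq hg (i := 0) (j := k) (by omega)
    rw [pow_zero, Nat.div_one, div_pow_mod_eq_of_lt ((digits_length_le_iff hg p).1 hL.le)] at h0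
    exact Or.inr (Or.inl h0.symm)
  · exact Or.inr <| Or.inr <| Nat.div_eq_of_lt <| (digits_length_le_iff hg p).1 hL

theorem div_pow_add_div_pow_le_or_eq {q k : ℕ} (hg : 1 < g) (hp : IsBasePalindrome g p)
    (hq : IsBasePalindrome g q) (hpq : p + q < g ^ (k + 2)) (hlast : p % g + q % g = g - 1)
    (htens : p / g % g + q / g % g = 0 ∨ p / g % g + q / g % g = g) :
    p / g ^ k + q / g ^ k ≤ g * (g - 1) ∨ p / g ^ k + q / g ^ k = g * g := by
  have hA := hp.div_pow_eq_or hg (k := k) (by omega)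
  have hB := hq.div_pow_eq_or hg (k := k) (by omega)
  have ha : p % g = 0 → p / g % g = 0 := fun h => by simp [hp.eq_zero_of_mod_eq_zero hg h]
  have hb : q % g = 0 → q / g % g = 0 := fun h => by simp [hq.eq_zero_of_mod_eq_zero hg h]
  have hs := Nat.mod_lt (p / g) (by omega : 0 < g)
  have ht := Nat.mod_lt (q / g) (by omega : 0 < g)
  have hsum : g * (p % g) + g * (q % g) = g * (g - 1) := by rw [← Nat.mul_add, hlast]
  have hgg : g * g = g * (g - 1) + g := by rw [← Nat.mul_add_one]; congr; omega
  have hmul : ∀ a, 1 ≤ a → a + (g - 1) ≤ g * a := fun a ha => by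
    have := Nat.mul_le_mul_left (g - 1) ha
    rw [Nat.mul_one, Nat.sub_one_mul] at this
    omega
  have := hmul (p % g)
  have := hmul (q % g)
  -- If the tens digits sum to `g`, all four low digits are nonzero, so a head other than the full
  -- `g * a + s` falls short of it by at least `g`.
  omega

end IsBasePalindrome

theorem special_form_not_sum_two_palindromes (g l n : ℕ) (hg : 3 ≤ g) (hl : 4 ≤ l)
    (hlen : (Nat.digits g n).length = l)
    (h1 : (Nat.digits g n).getD (l - 1) 0 = g - 1)
    (h2 : (Nat.digits g n).getD (l - 2) 0 = g - 1)
    (h3 : (Nat.digits g n).getD 1 0 = 0)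
    (h4 : (Nat.digits g n).getD 0 0 = g - 1) :
    ¬ ∃ p q : ℕ, IsBasePalindrome g p ∧ IsBasePalindrome g q ∧ n = p + q := by
  rintro ⟨p, q, hp, hq, rfl⟩
  obtain ⟨k, rfl⟩ : ∃ k, l = k + 2 := ⟨l - 2, by omega⟩
  have hg1 : 1 < g := by omega
  have hlt : p + q < g ^ (k + 2) := (Nat.digits_length_le_iff hg1 _).1 hlen.le
  simp only [Nat.getD_digits _ _ hg1, show k + 2 - 1 = k + 1 by omega, Nat.add_sub_cancel,
    pow_zero, pow_one, Nat.div_one] at h1 h2 h3 h4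
  have hlast : p % g + q % g = g - 1 := by
    have := Nat.mod_lt p (by omega : 0 < g)
    have := Nat.mod_lt q (by omega : 0 < g)
    rcases Nat.mod_add_mod_eq_or p q g with h | h <;> omega
  rw [Nat.add_div_eq_of_add_mod_lt (by omega)] at h3
  have htens : p / g % g + q / g % g = 0 ∨ p / g % g + q / g % g = g := by
    rcases Nat.mod_add_mod_eq_or (p / g) (q / g) g with h | h <;> omega
  have hhead : (p + q) / g ^ k = g * (g - 1) + (g - 1) := by rw [Nat.div_pow_eq_of_lt hlt, h1, h2]
  have hgg : g * g = g * (g - 1) + g := by rw [← Nat.mul_add_one]; congr; omega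
  have hle : p / g ^ k + q / g ^ k ≤ (p + q) / g ^ k := Nat.div_add_div_le_add_div
  have hge := Nat.add_div_le_div_add_div_add_one p q (g ^ k)
  have := hp.div_pow_add_div_pow_le_or_eq hg1 hq hlt hlast htens
  omega
end

section
/- Let g ≥ 5. Every positive integer with exactly five base g digits is a sum of three base g palindromes. -/
lemma dig_step {g : ℕ} (hg : 1 < g) {d r : ℕ} (hd : d < g) (hr : 0 < r) :
    Nat.digits g (d + g * r) = d :: Nat.digits g r := by
  rw [Nat.digits_def' hg (by positivity)]
  congr 1
  · rw [Nat.add_mul_mod_self_left, Nat.mod_eq_of_lt hd]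
  · rw [Nat.add_mul_div_left _ _ (by omega : 0 < g), Nat.div_eq_of_lt hd, Nat.zero_add]

lemma dig_single {g : ℕ} (hg : 1 < g) {z : ℕ} (hz0 : 0 < z) (hz : z < g) :
    Nat.digits g z = [z] := by
  rw [Nat.digits_def' hg hz0, Nat.mod_eq_of_lt hz, Nat.div_eq_of_lt hz]
  simp

lemma pal_single {g : ℕ} (hg : 1 < g) {z : ℕ} (hz : z < g) : IsBasePalindrome g z := by
  rcases Nat.eq_zero_or_pos z with h | h
  · subst h; simp [IsBasePalindrome]
  · unfold IsBasePalindrome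
    rw [dig_single hg h hz]
    simp

lemma pal_two {g : ℕ} (hg : 1 < g) {x : ℕ} (hx : x < g) :
    IsBasePalindrome g (x + g * x) := by
  rcases Nat.eq_zero_or_pos x with h | h
  · subst h; simp [IsBasePalindrome]
  · unfold IsBasePalindrome
    rw [dig_step hg hx h, dig_single hg h hx]
    simp

lemma pal_three {g : ℕ} (hg : 1 < g) {x y : ℕ} (hx0 : 0 < x) (hx : x < g) (hy : y < g) :
    IsBasePalindrome g (x + g * (y + g * x)) := by
  unfold IsBasePalindrome
  rw [dig_step hg hx (by positivity), dig_step hg hy (by positivity),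
    dig_single hg hx0 hx]
  simp

lemma pal_four {g : ℕ} (hg : 1 < g) {x y : ℕ} (hx0 : 0 < x) (hx : x < g) (hy : y < g) :
    IsBasePalindrome g (x + g * (y + g * (y + g * x))) := by
  unfold IsBasePalindrome
  rw [dig_step hg hx (by positivity), dig_step hg hy (by positivity),
    dig_step hg hy (by positivity), dig_single hg hx0 hx]
  simp

lemma pal_five {g : ℕ} (hg : 1 < g) {a b c : ℕ} (ha0 : 0 < a) (ha : a < g) (hb : b < g)
    (hc : c < g) : IsBasePalindrome g (a + g * (b + g * (c + g * (b + g * a)))) := by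
  unfold IsBasePalindrome
  rw [dig_step hg ha (by positivity), dig_step hg hb (by positivity),
    dig_step hg hc (by positivity), dig_step hg hb (by positivity),
    dig_single hg ha0 ha]
  simp

theorem five_digit_sum_three_palindromes (g : ℕ) (hg : 5 ≤ g) (n : ℕ)
    (h1 : g ^ 4 ≤ n) (h2 : n ≤ g ^ 5 - 1) :
    ∃ p q r : ℕ, IsBasePalindrome g p ∧ IsBasePalindrome g q ∧ IsBasePalindrome g r ∧
      n = p + q + r := by
  have hg1 : 1 < g := by omega
  have hg4 : 0 < g ^ 4 := by positivity
  obtain ⟨a, e, hne, he, ha1, ha2⟩ :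
      ∃ a e, n = g ^ 4 * a + e ∧ e < g ^ 4 ∧ 1 ≤ a ∧ a < g := by
    refine ⟨n / g ^ 4, n % g ^ 4, (Nat.div_add_mod n (g ^ 4)).symm, Nat.mod_lt _ hg4, ?_, ?_⟩
    · exact (Nat.one_le_div_iff hg4).mpr h1
    · rw [Nat.div_lt_iff_lt_mul hg4]
      have h5 : 0 < g ^ 5 := by positivity
      calc n ≤ g ^ 5 - 1 := h2
        _ < g ^ 5 := by omega
        _ = g * g ^ 4 := by ring
  by_cases hA : e < a
  · -- Case A : n = g^4 * a + e with e < a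
    rcases eq_or_lt_of_le ha1 with haa | haa
    · -- a = 1, hence e = 0, n = g^4
      have he0 : e = 0 := by omega
      obtain ⟨w, hw⟩ : ∃ w, g = w + 1 := ⟨g - 1, by omega⟩
      refine ⟨w + g * (w + g * (w + g * w)), 1, 0,
        pal_four hg1 (by omega) (by omega) (by omega),
        pal_single hg1 (by omega), pal_single hg1 (by omega), ?_⟩
      rw [hne, ← haa, he0, hw]; ring
    · -- a ≥ 2
      have hea : e ≤ a - 1 := by omega
      by_cases hd : e + 1 < a
      · -- d ≥ 1 : a = e + d2 + 2
        obtain ⟨d2, hd2⟩ : ∃ d2, a = e + d2 + 2 := ⟨a - e - 2, by omega⟩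
        obtain ⟨u, hu⟩ : ∃ u, g = d2 + u + 1 := ⟨g - d2 - 1, by omega⟩
        have hulg : u < g := by omega
        refine ⟨(e + d2 + 1) + g * ((d2 + u) + g * ((d2 + u) + g * ((d2 + u) + g * (e + d2 + 1)))),
          u, 0,
          pal_five hg1 (by omega) (by omega) (by omega) (by omega),
          pal_single hg1 hulg, pal_single hg1 (by omega), ?_⟩
        rw [hne, hd2, hu]; ring
      · -- d = 0 : a = e + 1, residual = g
        have hae : a = e + 1 := by omega
        obtain ⟨w, hw⟩ : ∃ w, g = w + 1 := ⟨g - 1, by omega⟩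
        refine ⟨e + g * (w + g * (w + g * (w + g * e))), w, 1,
          pal_five hg1 (by omega) (by omega) (by omega) (by omega),
          pal_single hg1 (by omega), pal_single hg1 (by omega), ?_⟩
        rw [hne, hae, hw]; ring
  · -- Case B : a ≤ e
    push_neg at hA
    obtain ⟨m, hme⟩ : ∃ m, e = a + m := ⟨e - a, by omega⟩
    have hm4 : m < g ^ 4 := by linarith
    have hK : 0 < g ^ 3 + g := by positivity
    have hg2 : (0 : ℕ) < g ^ 2 := by positivity
    have key : ∃ b c s, b < g ∧ c < g ∧ s < g ^ 2 + g ∧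
        m = (g ^ 3 + g) * b + g ^ 2 * c + s := by
      by_cases hb : m / (g ^ 3 + g) < g
      · have hdm := Nat.div_add_mod m (g ^ 3 + g)
        have hm1 : m % (g ^ 3 + g) < g ^ 3 + g := Nat.mod_lt _ hK
        by_cases hc : (m % (g ^ 3 + g)) / g ^ 2 < g
        · have hdm1 := Nat.div_add_mod (m % (g ^ 3 + g)) (g ^ 2)
          have hmod : (m % (g ^ 3 + g)) % g ^ 2 < g ^ 2 := Nat.mod_lt _ hg2
          exact ⟨m / (g ^ 3 + g), (m % (g ^ 3 + g)) / g ^ 2, (m % (g ^ 3 + g)) % g ^ 2,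
            hb, hc, by linarith, by linarith⟩
        · push_neg at hc
          have h3 : g * g ^ 2 ≤ m % (g ^ 3 + g) := (Nat.le_div_iff_mul_le hg2).mp hc
          obtain ⟨c, hgc⟩ : ∃ c, g = c + 1 := ⟨g - 1, by omega⟩
          have hcg : c * g ^ 2 ≤ m % (g ^ 3 + g) :=
            le_trans (Nat.mul_le_mul_right _ (by omega)) h3
          obtain ⟨s, hs⟩ : ∃ s, m % (g ^ 3 + g) = c * g ^ 2 + s :=
            ⟨m % (g ^ 3 + g) - c * g ^ 2, (Nat.add_sub_cancel' hcg).symm⟩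
          have hcg2 : c * g ^ 2 + g ^ 2 = g ^ 3 := by rw [hgc]; ring
          refine ⟨m / (g ^ 3 + g), c, s, hb, by omega, by linarith, by linarith⟩
      · push_neg at hb
        have h3 : g * (g ^ 3 + g) ≤ m := (Nat.le_div_iff_mul_le hK).mp hb
        obtain ⟨b, hgb⟩ : ∃ b, g = b + 1 := ⟨g - 1, by omega⟩
        have hbg : (g ^ 3 + g) * b ≤ m := by
          calc (g ^ 3 + g) * b ≤ (g ^ 3 + g) * g := Nat.mul_le_mul_left _ (by omega)
            _ = g * (g ^ 3 + g) := mul_comm _ _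
            _ ≤ m := h3
        obtain ⟨m1, hm1e⟩ : ∃ m1, m = (g ^ 3 + g) * b + m1 :=
          ⟨m - (g ^ 3 + g) * b, (Nat.add_sub_cancel' hbg).symm⟩
        have hKb : (g ^ 3 + g) * b + (g ^ 3 + g) = g ^ 4 + g ^ 2 := by rw [hgb]; ring
        have hgle : g ≤ g ^ 2 := by nlinarith
        have hg23 : g * g ^ 2 = g ^ 3 := by ring
        have hm1g3 : m1 < g * g ^ 2 := by linarith
        have hc : m1 / g ^ 2 < g := (Nat.div_lt_iff_lt_mul hg2).mpr hm1g3
        have hdm1 := Nat.div_add_mod m1 (g ^ 2)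
        have hmod : m1 % g ^ 2 < g ^ 2 := Nat.mod_lt _ hg2
        exact ⟨b, m1 / g ^ 2, m1 % g ^ 2, by omega, hc, by linarith, by linarith⟩
    obtain ⟨b, c, s, hbg, hcg, hslt, hmsum⟩ := key
    have hn2 : n = g ^ 4 * a + a + ((g ^ 3 + g) * b + g ^ 2 * c + s) := by
      rw [hne, hme, hmsum]; ring
    obtain ⟨x, y, hxy, hylt⟩ : ∃ x y, (g + 1) * x + y = s ∧ y < g + 1 :=
      ⟨s / (g + 1), s % (g + 1), Nat.div_add_mod s (g + 1), Nat.mod_lt _ (by omega)⟩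
    have hxlt : x < g := by
      by_contra hcon
      push_neg at hcon
      have h4 : (g + 1) * g ≤ (g + 1) * x := Nat.mul_le_mul_left _ hcon
      have h5 : (g + 1) * g = g ^ 2 + g := by ring
      linarith
    by_cases hyg : y < g
    · refine ⟨a + g * (b + g * (c + g * (b + g * a))), x + g * x, y,
        pal_five hg1 (by omega) ha2 hbg hcg, pal_two hg1 hxlt, pal_single hg1 hyg, ?_⟩
      rw [hn2, ← hxy]; ring
    · have hy : y = g := by omega
      have hs' : s = (g + 1) * x + g := by rw [← hxy, hy]
      by_cases hx0 : x = 0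
      · -- s = g : q = 1, r = g - 1
        obtain ⟨w, hw⟩ : ∃ w, g = w + 1 := ⟨g - 1, by omega⟩
        refine ⟨a + g * (b + g * (c + g * (b + g * a))), 1, w,
          pal_five hg1 (by omega) ha2 hbg hcg, pal_single hg1 (by omega),
          pal_single hg1 (by omega), ?_⟩
        rw [hn2, hs', hx0, hw]; ring
      · have hx1 : 1 ≤ x := by omega
        obtain ⟨x2, hx2⟩ : ∃ t, x = t + 1 := ⟨x - 1, by omega⟩
        by_cases hc0 : c = 0
        · by_cases hb0 : b = 0
          · -- b = c = 0
            by_cases ha1' : a = 1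
            · -- n = g^4 + 1 + s, p = g^4 - 1
              obtain ⟨w, hw⟩ : ∃ w, g = w + 1 := ⟨g - 1, by omega⟩
              rcases (by omega : x < w ∨ x = w) with hxw | hxw
              · refine ⟨w + g * (w + g * (w + g * w)), (x + 1) + g * (x + 1), 1,
                  pal_four hg1 (by omega) (by omega) (by omega),
                  pal_two hg1 (by omega), pal_single hg1 (by omega), ?_⟩
                rw [hn2, hs', ha1', hb0, hc0, hw]; ring
              · refine ⟨w + g * (w + g * (w + g * w)), 1 + g * (1 + g * 1), 0,
                  pal_four hg1 (by omega) (by omega) (by omega),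
                  pal_three hg1 (by omega) (by omega) (by omega),
                  pal_single hg1 (by omega), ?_⟩
                rw [hn2, hs', ha1', hb0, hc0, hxw, hw]; ring
            · -- a ≥ 2 : p = (a-1, g-1, g-2, g-1, a-1), s' = g^2+(x+2)g+(x+1)
              obtain ⟨a2, ha2'⟩ : ∃ t, a = t + 1 := ⟨a - 1, by omega⟩
              have ha20 : 1 ≤ a2 := by omega
              rcases (by omega : x + 3 ≤ g ∨ x + 2 = g ∨ x + 1 = g) with hxc | hxc | hxc
              · obtain ⟨u, hu⟩ : ∃ u, g = u + 2 := ⟨g - 2, by omega⟩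
                refine ⟨a2 + g * ((u + 1) + g * (u + g * ((u + 1) + g * a2))),
                  1 + g * ((x + 2) + g * 1), x,
                  pal_five hg1 (by omega) (by omega) (by omega) (by omega),
                  pal_three hg1 (by omega) (by omega) (by omega),
                  pal_single hg1 (by omega), ?_⟩
                rw [hn2, hs', hb0, hc0, ha2', hu]; ring
              · -- x = g - 2 : s' = 2g^2+g-1, q = 2g^2+2, r = g-3
                obtain ⟨u, hu⟩ : ∃ u, g = u + 3 := ⟨g - 3, by omega⟩
                have hxu : x = u + 1 := by omega
                refine ⟨a2 + g * ((u + 2) + g * ((u + 1) + g * ((u + 2) + g * a2))),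
                  2 + g * (0 + g * 2), u,
                  pal_five hg1 (by omega) (by omega) (by omega) (by omega),
                  pal_three hg1 (by omega) (by omega) (by omega),
                  pal_single hg1 (by omega), ?_⟩
                rw [hn2, hs', hb0, hc0, ha2', hxu, hu]; ring
              · -- x = g - 1 : s' = 2g^2+2g, q = 2g^2+g+2, r = g-2
                obtain ⟨u, hu⟩ : ∃ u, g = u + 2 := ⟨g - 2, by omega⟩
                have hxu : x = u + 1 := by omega
                refine ⟨a2 + g * ((u + 1) + g * (u + g * ((u + 1) + g * a2))),
                  2 + g * (1 + g * 2), u,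
                  pal_five hg1 (by omega) (by omega) (by omega) (by omega),
                  pal_three hg1 (by omega) (by omega) (by omega),
                  pal_single hg1 (by omega), ?_⟩
                rw [hn2, hs', hb0, hc0, ha2', hxu, hu]; ring
          · -- c = 0, b ≥ 1 : p = (a, b-1, g-1, b-1, a), s' = g^2+(x+2)g+x
            obtain ⟨b2, hb2⟩ : ∃ t, b = t + 1 := ⟨b - 1, by omega⟩
            rcases (by omega : x + 3 ≤ g ∨ x + 2 = g ∨ x + 1 = g) with hxc | hxc | hxc
            · obtain ⟨u, hu⟩ : ∃ u, g = u + 1 := ⟨g - 1, by omega⟩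
              refine ⟨a + g * (b2 + g * (u + g * (b2 + g * a))),
                1 + g * ((x + 2) + g * 1), x2,
                pal_five hg1 (by omega) ha2 (by omega) (by omega),
                pal_three hg1 (by omega) (by omega) (by omega),
                pal_single hg1 (by omega), ?_⟩
              rw [hn2, hs', hc0, hb2, hx2, hu]; ring
            · -- x = g-2 : s' = 2g^2+g-2, q = 2g^2+2, r = g-4
              obtain ⟨u, hu⟩ : ∃ u, g = u + 4 := ⟨g - 4, by omega⟩
              have hxu : x = u + 2 := by omega
              refine ⟨a + g * (b2 + g * ((u + 3) + g * (b2 + g * a))),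
                2 + g * (0 + g * 2), u,
                pal_five hg1 (by omega) ha2 (by omega) (by omega),
                pal_three hg1 (by omega) (by omega) (by omega),
                pal_single hg1 (by omega), ?_⟩
              rw [hn2, hs', hc0, hb2, hxu, hu]; ring
            · -- x = g-1 : s' = 2g^2+2g-1, q = 2g^2+g+2, r = g-3
              obtain ⟨u, hu⟩ : ∃ u, g = u + 3 := ⟨g - 3, by omega⟩
              have hxu : x = u + 2 := by omega
              refine ⟨a + g * (b2 + g * ((u + 2) + g * (b2 + g * a))),
                2 + g * (1 + g * 2), u,
                pal_five hg1 (by omega) ha2 (by omega) (by omega),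
                pal_three hg1 (by omega) (by omega) (by omega),
                pal_single hg1 (by omega), ?_⟩
              rw [hn2, hs', hc0, hb2, hxu, hu]; ring
        · -- c ≥ 1 : p = (a, b, c-1, b, a), s' = g^2+(x+1)g+x
          obtain ⟨c2, hc2⟩ : ∃ t, c = t + 1 := ⟨c - 1, by omega⟩
          rcases (by omega : x + 2 ≤ g ∨ x + 1 = g) with hxc | hxc
          · refine ⟨a + g * (b + g * (c2 + g * (b + g * a))),
              1 + g * ((x + 1) + g * 1), x2,
              pal_five hg1 (by omega) ha2 hbg (by omega),
              pal_three hg1 (by omega) (by omega) (by omega),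
              pal_single hg1 (by omega), ?_⟩
            rw [hn2, hs', hc2, hx2]; ring
          · -- x = g-1 : s' = 2g^2+g-1, q = 2g^2+2, r = g-3
            obtain ⟨u, hu⟩ : ∃ u, g = u + 3 := ⟨g - 3, by omega⟩
            have hxu : x = u + 2 := by omega
            refine ⟨a + g * (b + g * (c2 + g * (b + g * a))),
              2 + g * (0 + g * 2), u,
              pal_five hg1 (by omega) ha2 hbg (by omega),
              pal_three hg1 (by omega) (by omega) (by omega),
              pal_single hg1 (by omega), ?_⟩
            rw [hn2, hs', hc2, hxu, hu]; ring
end
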